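/- arXiv:2004.14683 — 10 statements merged into one kernel-verified Lean document; each statement's English description precedes it below -/
import Mathlib

section
/- Let G be a finite abelian group and φ: G → G an endomorphism, making G a ℤ[x]-module with x acting as φ. Suppose F(x) ∈ ℤ[x] is monic with F(φ) = 0, and F factors as F = A·B in ℤ[x] with Res(A,B) coprime to #G. Then the map g ↦ (V·B(φ)(g), U·A(φ)(g)) gives a group isomorphism G ≅ G[A] × G[B], where G[A] = {g ∈ G : A(φ)(g) = 0} and similarly for G[B], and U, V ∈ ℤ[x] satisfy U·A + V·B ≡ 1 mod #G. -/
/-!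
The Sylvester matrix yields `p, q ∈ ℤ[x]` with `p A + q B = Res(A, B)`; multiplying by an inverse
of `Res(A, B)` modulo `#G` gives `U A + V B ≡ 1 mod #G`, and as `#G` kills `G` this becomes
`U A(φ) + V B(φ) = 1` on `G`. Since `A(φ) B(φ) = F(φ) = 0`, the commuting operators `V B(φ)` and
`U A(φ)` are complementary idempotents with images in `G[A]` and `G[B]`, which gives the splitting.
-/

open Polynomial

/-- The Sylvester matrix of two integer polynomials. -/
noncomputable def sylvesterMatrix (f g : Polynomial ℤ) :
    Matrix (Fin (f.natDegree + g.natDegree)) (Fin (f.natDegree + g.natDegree)) ℤ :=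
  Matrix.of fun i j =>
    if (i : ℕ) < g.natDegree then
      (if (i : ℕ) ≤ (j : ℕ) ∧ (j : ℕ) ≤ (i : ℕ) + f.natDegree then
        f.coeff (f.natDegree - ((j : ℕ) - (i : ℕ))) else 0)
    else
      (if (i : ℕ) - g.natDegree ≤ (j : ℕ) ∧ (j : ℕ) ≤ ((i : ℕ) - g.natDegree) + g.natDegree then
        g.coeff (g.natDegree - ((j : ℕ) - ((i : ℕ) - g.natDegree))) else 0)

/-- The resultant of two integer polynomials, as the determinant of their Sylvester matrix. -/
noncomputable def polyResultant (f g : Polynomial ℤ) : ℤ := (sylvesterMatrix f g).det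

/- `sylvesterMatrix` is the transpose of Mathlib's `sylvester` with rows and columns listed in
reverse order. -/
theorem polyResultant_eq_resultant (f g : ℤ[X]) : polyResultant f g = f.resultant g := by
  rw [polyResultant, resultant, ← Matrix.det_transpose,
    ← Matrix.det_submatrix_equiv_self Fin.revPerm]
  congr 1
  ext i j
  induction j using Fin.addCases <;>
  · simp only [Matrix.submatrix_apply, Matrix.transpose_apply, sylvesterMatrix, sylvester,
      Matrix.of_apply, Fin.addCases_left, Fin.addCases_right, Fin.revPerm_apply, Fin.val_rev,
      Fin.val_castAdd, Fin.val_natAdd, Set.mem_Icc]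
    split_ifs <;> first | omega | (congr 1; omega)

theorem Polynomial.exists_mul_add_mul_eq_one_add_C_mul_of_isCoprime_resultant
    {R : Type*} [CommRing R] {f g : R[X]} {r : R} (hfg : (f * g).Monic)
    (hres : IsCoprime (f.resultant g) r) :
    ∃ u v w : R[X], u * f + v * g = 1 + C r * w := by
  by_cases hdeg : f.natDegree = 0 ∧ g.natDegree = 0
  · have : f * g = 1 :=
      hfg.natDegree_eq_zero.1 (by have := natDegree_mul_le (p := f) (q := g); omega)
    exact ⟨g, 0, 0, by rw [mul_comm, this]; ring⟩
  · obtain ⟨p, q, -, -, hpq⟩ :=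
      exists_mul_add_mul_eq_C_resultant f g le_rfl le_rfl (by tauto)
    obtain ⟨a, b, hab⟩ := hres
    refine ⟨C a * p, C a * q, -C b, ?_⟩
    calc C a * p * f + C a * q * g = C (a * f.resultant g) := by rw [C_mul, ← hpq]; ring
      _ = 1 + C r * -C b := by rw [eq_sub_of_add_eq hab, C_sub, C_mul, C_1]; ring

namespace AddMonoid.End

variable {G : Type*} [AddCommGroup G] (φ : AddMonoid.End G)

theorem aeval_mul_apply (p q : ℤ[X]) (g : G) :
    aeval φ (p * q) g = aeval φ p (aeval φ q g) := by
  rw [map_mul]; rfl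

variable {φ} {A B U V : ℤ[X]}

theorem aeval_mul_apply_eq_zero {g : G} (hg : aeval φ B g = 0) (p : ℤ[X]) :
    aeval φ (p * B) g = 0 := by
  rw [aeval_mul_apply, hg, map_zero]

theorem aeval_apply_aeval_mul_apply_eq_zero (hAB : aeval φ (A * B) = 0) (p : ℤ[X]) (g : G) :
    aeval φ A (aeval φ (p * B) g) = 0 := by
  rw [← aeval_mul_apply, mul_left_comm, aeval_mul_apply, hAB]
  exact map_zero _

theorem aeval_apply_add_aeval_apply (hUV : aeval φ (U * A + V * B) = 1) (g : G) :
    aeval φ (U * A) g + aeval φ (V * B) g = g := by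
  rw [map_add] at hUV
  exact congr($hUV g)

noncomputable def kerProdKerEquivOfBezout (hAB : aeval φ (A * B) = 0)
    (hUV : aeval φ (U * A + V * B) = 1) :
    G ≃+ (AddMonoidHom.ker (aeval φ A : AddMonoid.End G) ×
      AddMonoidHom.ker (aeval φ B : AddMonoid.End G)) where
  toFun g := (⟨aeval φ (V * B) g, aeval_apply_aeval_mul_apply_eq_zero hAB V g⟩,
    ⟨aeval φ (U * A) g, aeval_apply_aeval_mul_apply_eq_zero (mul_comm A B ▸ hAB) U g⟩)
  invFun x := x.1 + x.2
  left_inv g := (add_comm _ _).trans (aeval_apply_add_aeval_apply hUV g)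
  right_inv := by
    rintro ⟨⟨a, ha : aeval φ A a = 0⟩, ⟨b, hb : aeval φ B b = 0⟩⟩
    have hVBa := aeval_apply_add_aeval_apply hUV a
    have hUAb := aeval_apply_add_aeval_apply hUV b
    rw [aeval_mul_apply_eq_zero ha, zero_add] at hVBa
    rw [aeval_mul_apply_eq_zero hb, add_zero] at hUAb
    ext
    · simp only [map_add, hVBa, aeval_mul_apply_eq_zero hb, add_zero]
    · simp only [map_add, hUAb, aeval_mul_apply_eq_zero ha, zero_add]
  map_add' g h := by ext <;> simp

theorem natCast_card_eq_zero [Fintype G] : (Fintype.card G : AddMonoid.End G) = 0 :=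
  DFunLike.ext _ _ fun _ => by rw [natCast_apply, card_nsmul_eq_zero]; rfl

end AddMonoid.End

/-- if `F = A * B` is monic, kills the finite abelian group `G` (with `x` acting
as the endomorphism `φ`), and `Res(A,B)` is coprime to `#G`, then `G ≅ G[A] × G[B]` via
`g ↦ (V·B(φ) g, U·A(φ) g)` where `U·A + V·B ≡ 1 mod #G`. -/
theorem stmt0 (G : Type*) [AddCommGroup G] [Fintype G] (φ : AddMonoid.End G)
    (F A B : Polynomial ℤ) (hmonic : F.Monic)
    (hF : Polynomial.aeval φ F = 0) (hAB : F = A * B)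
    (hres : IsCoprime (polyResultant A B) (Fintype.card G : ℤ)) :
    ∃ U V W : Polynomial ℤ,
      U * A + V * B = 1 + Polynomial.C (Fintype.card G : ℤ) * W ∧
      ∃ e : G ≃+
          (AddMonoidHom.ker (Polynomial.aeval φ A : AddMonoid.End G) ×
           AddMonoidHom.ker (Polynomial.aeval φ B : AddMonoid.End G)),
        ∀ g : G, ((e g).1 : G) = Polynomial.aeval φ (V * B) g ∧
                 ((e g).2 : G) = Polynomial.aeval φ (U * A) g := by
  obtain ⟨U, V, W, hUVW⟩ :=
    exists_mul_add_mul_eq_one_add_C_mul_of_isCoprime_resultant (hAB ▸ hmonic)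
      (polyResultant_eq_resultant A B ▸ hres)
  have hUV : aeval φ (U * A + V * B) = 1 := by
    rw [hUVW, map_add, map_one, map_mul, aeval_C, map_natCast,
      AddMonoid.End.natCast_card_eq_zero, zero_mul, add_zero]
  exact ⟨U, V, W, hUVW, AddMonoid.End.kerProdKerEquivOfBezout (hAB ▸ hF) hUV,
    fun _ => ⟨rfl, rfl⟩⟩
end

section
/- Let N ∈ ℕ, let (c,d) represent a cusp of X_H(N) with gcd(c,d,N) = 1, let g₂ = gcd(N, c²), N₂ = N/g₂, and let a be such that ad - bc = 1 for some b (i.e. [a b; c d] ∈ SL₂(ℤ)). Then the width of the cusp, defined as the smallest positive integer w with M_s [1 w; 0 1] M_s⁻¹ ∈ Γ_H(N) for M_s = [a b; c d], equals N₂ · min{ t ∈ ℕ : 1 + a·c·N₂·t ∈ H }. -/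
/-!
Conjugating `[1 w; 0 1]` by `M_s` gives `[1 - acw, a²w; -c²w, 1 + acw]`. Its lower-left
entry vanishes mod `N` exactly when `N₂ ∣ w`, and then the two diagonal entries are inverse to
each other mod `N`, so only the condition `1 + acw ∈ H` remains. Hence the admissible widths
are the multiples `N₂ t` with `1 + a c N₂ t ∈ H`.
-/

theorem Int.dvd_mul_iff_div_gcd_dvd {m c w : ℤ} (hm : 0 < m) :
    m ∣ c * w ↔ m / gcd m c ∣ w := by
  refine ⟨fun h => ?_, fun h => ?_⟩
  · have hcw : c * w ≡ c * 0 [ZMOD m] := by simpa using Int.modEq_zero_iff_dvd.mpr h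
    exact Int.modEq_zero_iff_dvd.mp (Int.ModEq.cancel_left_div_gcd hm hcw)
  · rw [← Int.mul_ediv_cancel' (Int.gcd_dvd_left m c)]
    exact mul_dvd_mul (Int.gcd_dvd_right m c) h

theorem Nat.sInf_image_mul_left (k : ℕ) (T : Set ℕ) : sInf ((k * ·) '' T) = k * sInf T := by
  rcases T.eq_empty_or_nonempty with rfl | hT
  · simp
  refine le_antisymm (Nat.sInf_le ⟨_, Nat.sInf_mem hT, rfl⟩) ?_
  refine le_csInf (hT.image _) ?_
  rintro _ ⟨t, ht, rfl⟩
  exact Nat.mul_le_mul_left _ (Nat.sInf_le ht)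

theorem Subgroup.exists_mem_coe_eq_of_mul_eq_one {M : Type*} [Monoid M] {H : Subgroup Mˣ}
    {x y : M} (hx : ∃ u ∈ H, (u : M) = x) (hxy : x * y = 1) : ∃ u ∈ H, (u : M) = y := by
  obtain ⟨u, hu, rfl⟩ := hx
  exact ⟨u⁻¹, H.inv_mem hu, Units.inv_eq_of_mul_eq_one_right hxy⟩

theorem ZMod.intCast_one_add_mul_one_sub_eq_one {N : ℕ} {a c w : ℤ}
    (h : (N : ℤ) ∣ c ^ 2 * w) :
    ((1 + a * c * w : ℤ) : ZMod N) * ((1 - a * c * w : ℤ) : ZMod N) = 1 := by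
  have h0 : ((c ^ 2 * w : ℤ) : ZMod N) = 0 := (ZMod.intCast_zmod_eq_zero_iff_dvd _ N).mpr h
  push_cast at h0 ⊢
  linear_combination (-(a : ZMod N) ^ 2 * w) * h0

theorem stmt3_general (N : ℕ) (hN : 0 < N) (H : Subgroup (ZMod N)ˣ)
    (a c : ℤ)
    (N₂ : ℕ) (hN₂ : N₂ = N / Int.gcd (N : ℤ) (c ^ 2)) :
    sInf {w : ℕ | 0 < w ∧ (N : ℤ) ∣ c ^ 2 * w ∧
        (∃ u ∈ H, ((u : (ZMod N)ˣ) : ZMod N) = ((1 - a * c * w : ℤ) : ZMod N)) ∧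
        (∃ u ∈ H, ((u : (ZMod N)ˣ) : ZMod N) = ((1 + a * c * w : ℤ) : ZMod N))}
      = N₂ * sInf {t : ℕ | 0 < t ∧
        ∃ u ∈ H, ((u : (ZMod N)ˣ) : ZMod N) = ((1 + a * c * N₂ * t : ℤ) : ZMod N)} := by
  have hdvd (w : ℕ) : (N : ℤ) ∣ c ^ 2 * w ↔ N₂ ∣ w := by
    rw [Int.dvd_mul_iff_div_gcd_dvd (by positivity), hN₂]
    norm_cast
  have hN₂pos : 0 < N₂ := Nat.pos_of_dvd_of_pos ((hdvd N).mp (dvd_mul_left _ _)) hN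
  rw [← Nat.sInf_image_mul_left]
  congr 1
  ext w
  simp only [Set.mem_ofPred_eq, Set.mem_image]
  constructor
  · rintro ⟨hw, hwN, -, hplus⟩
    obtain ⟨t, rfl⟩ := (hdvd w).mp hwN
    refine ⟨t, ⟨Nat.pos_of_mul_pos_left hw, ?_⟩, rfl⟩
    simpa only [Nat.cast_mul, ← mul_assoc] using hplus
  · rintro ⟨t, ⟨ht, hplus⟩, rfl⟩
    have hwN : (N : ℤ) ∣ c ^ 2 * ↑(N₂ * t) := (hdvd _).mpr (dvd_mul_right _ _)
    have hplus' :
      ∃ u ∈ H, ((u : (ZMod N)ˣ) : ZMod N) = ((1 + a * c * ↑(N₂ * t) : ℤ) : ZMod N) := by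
      simpa only [Nat.cast_mul, ← mul_assoc] using hplus
    exact ⟨Nat.mul_pos hN₂pos ht, hwN,
      Subgroup.exists_mem_coe_eq_of_mul_eq_one hplus'
        (ZMod.intCast_one_add_mul_one_sub_eq_one hwN), hplus'⟩

/-- the width of the cusp of `X_H(N)` represented by `(c,d)`,
i.e. the least `w > 0` with `M_s [1 w; 0 1] M_s⁻¹ ∈ Γ_H(N)` for
`M_s = [a b; c d] ∈ SL₂(ℤ)`, equals `N₂ · min{ t > 0 : 1 + a c N₂ t ∈ H }`,
where `N₂ = N / gcd(N, c²)`.  (Membership of `[1-acw, a²w; -c²w, 1+acw]` in `Γ_H(N)`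
is expressed by `N ∣ c²w` and both diagonal entries lying in `H` mod `N`.) -/
theorem stmt3 (N : ℕ) (hN : 0 < N) (H : Subgroup (ZMod N)ˣ) (hH : -1 ∈ H)
    (a b c d : ℤ) (hdet : a * d - b * c = 1)
    (N₂ : ℕ) (hN₂ : N₂ = N / Int.gcd (N : ℤ) (c ^ 2)) :
    sInf {w : ℕ | 0 < w ∧ (N : ℤ) ∣ c ^ 2 * w ∧
        (∃ u ∈ H, ((u : (ZMod N)ˣ) : ZMod N) = ((1 - a * c * w : ℤ) : ZMod N)) ∧
        (∃ u ∈ H, ((u : (ZMod N)ˣ) : ZMod N) = ((1 + a * c * w : ℤ) : ZMod N))}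
      = N₂ * sInf {t : ℕ | 0 < t ∧
        ∃ u ∈ H, ((u : (ZMod N)ˣ) : ZMod N) = ((1 + a * c * N₂ * t : ℤ) : ZMod N)} :=
  stmt3_general N hN H a c N₂ hN₂
end

section
/- Let N ∈ ℕ, H ≤ (ℤ/Nℤ)^× a subgroup containing -1, and let s be a cusp of X_H(N) represented by a pair (c,d) with gcd(c,d,N)=1. Then the width of s equals N if and only if gcd(c,N) = 1. -/
/-!
If `N ∣ c * w` then `N ∣ c² w` and `1 ± a c w ≡ 1 (mod N)`, so `w` is a period with the trivial
unit of `H`. When `g = gcd(c, N) > 1` this applies to `w = N / g < N`; when `gcd(c, N) = 1`, the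
condition `N ∣ c² w` alone forces `N ∣ w`, and `w = N` is a period.
-/

/-- The positive `w` with `[1 - a c w, a² w; -c² w, 1 + a c w] ∈ Γ_H(N)`; the width of the cusp
represented by the bottom row `(c, d)` of `[a b; c d] ∈ SL₂(ℤ)` is its least element. -/
def cuspPeriods (N : ℕ) (H : Subgroup (ZMod N)ˣ) (a c : ℤ) : Set ℕ :=
  {w : ℕ | 0 < w ∧ (N : ℤ) ∣ c ^ 2 * w ∧
    (∃ u ∈ H, ((u : (ZMod N)ˣ) : ZMod N) = ((1 - a * c * w : ℤ) : ZMod N)) ∧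
    (∃ u ∈ H, ((u : (ZMod N)ˣ) : ZMod N) = ((1 + a * c * w : ℤ) : ZMod N))}

section CuspPeriods

variable {N : ℕ} (H : Subgroup (ZMod N)ˣ) {a c : ℤ}

lemma Subgroup.exists_mem_val_eq_of_modEq_one {y : ℤ} (hy : y ≡ 1 [ZMOD N]) :
    ∃ u ∈ H, ((u : (ZMod N)ˣ) : ZMod N) = (y : ZMod N) :=
  ⟨1, H.one_mem, by rw [Units.val_one, (ZMod.intCast_eq_intCast_iff y 1 N).2 hy, Int.cast_one]⟩

lemma mem_cuspPeriods_of_dvd_mul {w : ℕ} (hw : 0 < w) (hcw : (N : ℤ) ∣ c * w) :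
    w ∈ cuspPeriods N H a c := by
  have hacw : (N : ℤ) ∣ a * c * w := by
    rw [mul_assoc]
    exact hcw.mul_left a
  refine ⟨hw, ?_, H.exists_mem_val_eq_of_modEq_one ?_, H.exists_mem_val_eq_of_modEq_one ?_⟩
  · rw [pow_two, mul_assoc]
    exact hcw.mul_left c
  · rw [Int.modEq_iff_dvd]
    simpa using hacw
  · rw [Int.modEq_iff_dvd]
    simpa using hacw.neg_right

lemma dvd_of_mem_cuspPeriods (hc : IsCoprime c N) {w : ℕ} (hw : w ∈ cuspPeriods N H a c) :
    N ∣ w :=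
  Int.natCast_dvd_natCast.mp ((hc.symm.pow_right (n := 2)).dvd_of_dvd_mul_left hw.2.1)

lemma sInf_cuspPeriods_of_isCoprime (hN : 0 < N) (hc : IsCoprime c N) :
    sInf (cuspPeriods N H a c) = N := by
  refine IsLeast.csInf_eq ⟨mem_cuspPeriods_of_dvd_mul H hN (dvd_mul_left _ _), ?_⟩
  intro w hw
  exact Nat.le_of_dvd hw.1 (dvd_of_mem_cuspPeriods H hc hw)

lemma sInf_cuspPeriods_lt_of_gcd_ne_one (hN : 0 < N) (hg : Int.gcd c N ≠ 1) :
    sInf (cuspPeriods N H a c) < N := by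
  set g := Int.gcd c N
  have hgN : g ∣ N := Int.natCast_dvd_natCast.mp (Int.gcd_dvd_right c N)
  have hg_pos : 0 < g := Nat.pos_of_dvd_of_pos hgN hN
  obtain ⟨c', hc'⟩ : (g : ℤ) ∣ c := Int.gcd_dvd_left c N
  have hN' : (g : ℤ) * (N / g : ℕ) = N := by exact_mod_cast Nat.mul_div_cancel' hgN
  have hcw : (N : ℤ) ∣ c * (N / g : ℕ) := ⟨c', by rw [hc']; linear_combination c' * hN'⟩
  calc sInf (cuspPeriods N H a c) ≤ N / g :=
        Nat.sInf_le (mem_cuspPeriods_of_dvd_mul H (Nat.div_pos (Nat.le_of_dvd hN hgN) hg_pos) hcw)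
    _ < N := Nat.div_lt_self hN (by omega)

end CuspPeriods

theorem stmt4_general (N : ℕ) (hN : 0 < N) (H : Subgroup (ZMod N)ˣ)
    (a c : ℤ) :
    sInf {w : ℕ | 0 < w ∧ (N : ℤ) ∣ c ^ 2 * w ∧
        (∃ u ∈ H, ((u : (ZMod N)ˣ) : ZMod N) = ((1 - a * c * w : ℤ) : ZMod N)) ∧
        (∃ u ∈ H, ((u : (ZMod N)ˣ) : ZMod N) = ((1 + a * c * w : ℤ) : ZMod N))} = N
      ↔ Int.gcd c (N : ℤ) = 1 := by
  change sInf (cuspPeriods N H a c) = N ↔ _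
  constructor
  · intro hwidth
    by_contra hg
    exact (sInf_cuspPeriods_lt_of_gcd_ne_one H hN hg).ne hwidth
  · intro hg
    exact sInf_cuspPeriods_of_isCoprime H hN (Int.isCoprime_iff_gcd_eq_one.mpr hg)

/-- the width of the cusp of `X_H(N)` represented by `(c,d)` equals `N`
if and only if `gcd(c, N) = 1`.  The width is the least `w > 0` such that
`[1-acw, a²w; -c²w, 1+acw] ∈ Γ_H(N)`, where `[a b; c d] ∈ SL₂(ℤ)`. -/
theorem stmt4 (N : ℕ) (hN : 0 < N) (H : Subgroup (ZMod N)ˣ) (hH : -1 ∈ H)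
    (a b c d : ℤ) (hdet : a * d - b * c = 1) :
    sInf {w : ℕ | 0 < w ∧ (N : ℤ) ∣ c ^ 2 * w ∧
        (∃ u ∈ H, ((u : (ZMod N)ˣ) : ZMod N) = ((1 - a * c * w : ℤ) : ZMod N)) ∧
        (∃ u ∈ H, ((u : (ZMod N)ˣ) : ZMod N) = ((1 + a * c * w : ℤ) : ZMod N))} = N
      ↔ Int.gcd c (N : ℤ) = 1 :=
  stmt4_general N hN H a c
end

section
/- For a matrix M = [a b; c d] ∈ SL₂(ℤ/Nℤ), the condition that M·[1 0; 0 x]·M⁻¹ ∈ U_H for all x ∈ (ℤ/Nℤ)^× is equivalent to: for all x ∈ (ℤ/Nℤ)^×, cd(x-1) ≡ 0 mod N and ad(x-1) + 1 ∈ H. -/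
namespace Matrix.SpecialLinearGroup

variable {R : Type*} [CommRing R]

lemma mul_diag_one_mul_inv_apply_one_zero (M : SpecialLinearGroup (Fin 2) R) (x : R) :
    ((M : Matrix (Fin 2) (Fin 2) R) * of ![![1, 0], ![0, x]] *
        ((M⁻¹ : SpecialLinearGroup (Fin 2) R) : Matrix (Fin 2) (Fin 2) R)) 1 0 =
      -((M : Matrix (Fin 2) (Fin 2) R) 1 0 * (M : Matrix (Fin 2) (Fin 2) R) 1 1 * (x - 1)) := by
  rw [coe_inv, adjugate_fin_two]
  simp only [mul_apply, Fin.sum_univ_two, of_apply, cons_val', cons_val_zero, cons_val_one,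
    empty_val', cons_val_fin_one]
  ring

lemma mul_diag_one_mul_inv_apply_one_one (M : SpecialLinearGroup (Fin 2) R) (x : R) :
    ((M : Matrix (Fin 2) (Fin 2) R) * of ![![1, 0], ![0, x]] *
        ((M⁻¹ : SpecialLinearGroup (Fin 2) R) : Matrix (Fin 2) (Fin 2) R)) 1 1 =
      (M : Matrix (Fin 2) (Fin 2) R) 0 0 * (M : Matrix (Fin 2) (Fin 2) R) 1 1 * (x - 1) + 1 := by
  have hdet := M.det_coe
  rw [det_fin_two] at hdet
  rw [coe_inv, adjugate_fin_two]
  simp only [mul_apply, Fin.sum_univ_two, of_apply, cons_val', cons_val_zero, cons_val_one,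
    empty_val', cons_val_fin_one]
  linear_combination hdet

end Matrix.SpecialLinearGroup

lemma Subgroup.exists_mem_coe_eq_neg_iff {R : Type*} [Ring R] {H : Subgroup Rˣ} (hH : -1 ∈ H)
    (y : R) : (∃ u ∈ H, (u : R) = -y) ↔ ∃ u ∈ H, (u : R) = y := by
  have neg_mem {u : Rˣ} (hu : u ∈ H) : -u ∈ H := by
    simpa only [neg_one_mul] using H.mul_mem hH hu
  constructor
  · rintro ⟨u, hu, hy⟩
    exact ⟨-u, neg_mem hu, by simp [hy]⟩
  · rintro ⟨u, hu, rfl⟩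
    exact ⟨-u, neg_mem hu, by simp⟩

open Matrix.SpecialLinearGroup in
theorem stmt5_general (N : ℕ) (H : Subgroup (ZMod N)ˣ) (hH : -1 ∈ H)
    (M : Matrix.SpecialLinearGroup (Fin 2) (ZMod N)) :
    (∀ x : (ZMod N)ˣ,
      let g : Matrix (Fin 2) (Fin 2) (ZMod N) :=
        (M : Matrix (Fin 2) (Fin 2) (ZMod N)) *
          Matrix.of ![![1, 0], ![0, (x : ZMod N)]] *
          ((M⁻¹ : Matrix.SpecialLinearGroup (Fin 2) (ZMod N)) : Matrix (Fin 2) (Fin 2) (ZMod N))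
      (g 1 0 = 0 ∧ ∃ u ∈ H, ((u : (ZMod N)ˣ) : ZMod N) = g 1 1) ∨
      ((-g) 1 0 = 0 ∧ ∃ u ∈ H, ((u : (ZMod N)ˣ) : ZMod N) = (-g) 1 1))
    ↔ (∀ x : (ZMod N)ˣ,
      (M : Matrix (Fin 2) (Fin 2) (ZMod N)) 1 0 * (M : Matrix (Fin 2) (Fin 2) (ZMod N)) 1 1 *
          ((x : ZMod N) - 1) = 0 ∧
      ∃ u ∈ H, ((u : (ZMod N)ˣ) : ZMod N) =
        (M : Matrix (Fin 2) (Fin 2) (ZMod N)) 0 0 * (M : Matrix (Fin 2) (Fin 2) (ZMod N)) 1 1 *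
          ((x : ZMod N) - 1) + 1) := by
  refine forall_congr' fun x => ?_
  simp only [Matrix.neg_apply, mul_diag_one_mul_inv_apply_one_zero,
    mul_diag_one_mul_inv_apply_one_one, neg_neg, neg_eq_zero,
    Subgroup.exists_mem_coe_eq_neg_iff hH, or_self]

/-- for `M = [a b; c d] ∈ SL₂(ℤ/Nℤ)`, the condition
`M·[1 0; 0 x]·M⁻¹ ∈ U_H` for all units `x` is equivalent to:
for all `x ∈ (ℤ/Nℤ)ˣ`, `cd(x-1) = 0` and `ad(x-1) + 1 ∈ H`.
Here `U_H` consists of matrices `g` with `g` or `-g` upper triangular with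
lower-right entry in `H` (the subgroup of upper triangular matrices mod `±1`). -/
theorem stmt5 (N : ℕ) (hN : 0 < N) (H : Subgroup (ZMod N)ˣ) (hH : -1 ∈ H)
    (M : Matrix.SpecialLinearGroup (Fin 2) (ZMod N)) :
    (∀ x : (ZMod N)ˣ,
      let g : Matrix (Fin 2) (Fin 2) (ZMod N) :=
        (M : Matrix (Fin 2) (Fin 2) (ZMod N)) *
          Matrix.of ![![1, 0], ![0, (x : ZMod N)]] *
          ((M⁻¹ : Matrix.SpecialLinearGroup (Fin 2) (ZMod N)) : Matrix (Fin 2) (Fin 2) (ZMod N))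
      (g 1 0 = 0 ∧ ∃ u ∈ H, ((u : (ZMod N)ˣ) : ZMod N) = g 1 1) ∨
      ((-g) 1 0 = 0 ∧ ∃ u ∈ H, ((u : (ZMod N)ˣ) : ZMod N) = (-g) 1 1))
    ↔ (∀ x : (ZMod N)ˣ,
      (M : Matrix (Fin 2) (Fin 2) (ZMod N)) 1 0 * (M : Matrix (Fin 2) (Fin 2) (ZMod N)) 1 1 *
          ((x : ZMod N) - 1) = 0 ∧
      ∃ u ∈ H, ((u : (ZMod N)ˣ) : ZMod N) =
        (M : Matrix (Fin 2) (Fin 2) (ZMod N)) 0 0 * (M : Matrix (Fin 2) (Fin 2) (ZMod N)) 1 1 *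
          ((x : ZMod N) - 1) + 1) :=
  stmt5_general N H hH M
end

section
/- Let N ∈ ℕ with φ(N) ≥ 3 (Euler totient). A matrix M = [a b; c d] ∈ SL₂(ℤ/Nℤ) satisfies the condition (c, dx) ≡ ±(c, d) mod N for all x ∈ (ℤ/Nℤ)^× if and only if 2d ≡ 0 mod N. -/
/-- for `N` with `φ(N) ≥ 3` and `M = [a b; c d] ∈ SL₂(ℤ/Nℤ)`,
one has `(c, dx) ≡ ±(c, d)` for all units `x` iff `2d ≡ 0 mod N`. -/
theorem stmt6 (N : ℕ) (hN : 3 ≤ Nat.totient N)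
    (M : Matrix.SpecialLinearGroup (Fin 2) (ZMod N)) :
    (∀ x : (ZMod N)ˣ,
      ((M : Matrix (Fin 2) (Fin 2) (ZMod N)) 1 0 = (M : Matrix (Fin 2) (Fin 2) (ZMod N)) 1 0 ∧
        (M : Matrix (Fin 2) (Fin 2) (ZMod N)) 1 1 * (x : ZMod N) =
          (M : Matrix (Fin 2) (Fin 2) (ZMod N)) 1 1) ∨
      ((M : Matrix (Fin 2) (Fin 2) (ZMod N)) 1 0 = -(M : Matrix (Fin 2) (Fin 2) (ZMod N)) 1 0 ∧
        (M : Matrix (Fin 2) (Fin 2) (ZMod N)) 1 1 * (x : ZMod N) =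
          -(M : Matrix (Fin 2) (Fin 2) (ZMod N)) 1 1))
    ↔ 2 * (M : Matrix (Fin 2) (Fin 2) (ZMod N)) 1 1 = 0 := by
  haveI hNZ : NeZero N := ⟨by rintro rfl; simp at hN⟩
  set a := (M : Matrix (Fin 2) (Fin 2) (ZMod N)) 0 0 with ha
  set b := (M : Matrix (Fin 2) (Fin 2) (ZMod N)) 0 1 with hb
  set c := (M : Matrix (Fin 2) (Fin 2) (ZMod N)) 1 0 with hc
  set d := (M : Matrix (Fin 2) (Fin 2) (ZMod N)) 1 1 with hd'
  have hdet : a * d - b * c = 1 := by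
    have h := M.2
    rwa [Matrix.det_fin_two] at h
  -- odd units: if 2 ∣ N then every unit is of the form 2*j+1
  have hodd : (2:ℕ) ∣ N → ∀ x : (ZMod N)ˣ, ∃ j : ℕ,
      (x : ZMod N) = 2 * (j : ZMod N) + 1 := by
    intro h2N x
    have hcop := ZMod.val_coe_unit_coprime x
    have hodd : ¬ (2:ℕ) ∣ (x : ZMod N).val := by
      intro h
      have := Nat.Coprime.eq_one_of_dvd (Nat.Coprime.coprime_dvd_left h hcop)
        (by exact h2N)
      omega
    obtain ⟨j, hj⟩ : ∃ j, (x : ZMod N).val = 2 * j + 1 := ⟨(x : ZMod N).val / 2, by omega⟩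
    refine ⟨j, ?_⟩
    have : (((x : ZMod N).val : ℕ) : ZMod N) = (x : ZMod N) := by
      rw [ZMod.natCast_val, ZMod.cast_id]
    rw [← this, hj]
    push_cast
    ring
  constructor
  · -- hard direction
    intro H
    by_contra hd
    have h2c : 2 * c = 0 := by
      rcases H (-1) with ⟨-, h⟩ | ⟨h, -⟩
      · exfalso; apply hd
        simp only [Units.val_neg, Units.val_one, mul_neg_one] at h
        linear_combination -h
      · linear_combination h
    have key : ∀ x : (ZMod N)ˣ, d * x = d ∨ d * x = -d := by
      intro x
      rcases H x with ⟨-, h⟩ | ⟨-, h⟩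
      exacts [Or.inl h, Or.inr h]
    have he : (2 * a) * d = 2 := by linear_combination 2 * hdet + b * h2c
    -- pigeonhole: two distinct units with d*u = d*v
    have hcard : Fintype.card Bool < Fintype.card (ZMod N)ˣ := by
      rw [ZMod.card_units_eq_totient]
      simp only [Fintype.card_bool]
      omega
    obtain ⟨u, v, huv, hf⟩ := Fintype.exists_ne_map_eq_of_card_lt
      (fun x : (ZMod N)ˣ => decide (d * x = d)) hcard
    have hiff : (d * u = d) ↔ (d * v = d) := decide_eq_decide.mp hf
    have hz : d * ((u : ZMod N) - v) = 0 := by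
      by_cases h1 : d * u = d
      · have h2 := hiff.mp h1
        linear_combination h1 - h2
      · have h1' := (key u).resolve_left h1
        have h2' := (key v).resolve_left (fun h => h1 (hiff.mpr h))
        linear_combination h1' - h2'
    set z : ZMod N := (u : ZMod N) - v with hzdef
    have hzne : z ≠ 0 := sub_ne_zero.mpr (fun h => huv (Units.ext h))
    have h2z : 2 * z = 0 := by linear_combination 2 * a * hz - z * he
    have h2N : (2:ℕ) ∣ N := by
      by_contra h
      have hu2 : IsUnit (2 : ZMod N) := by
        have := (ZMod.isUnit_iff_coprime 2 N).mpr
          ((Nat.Prime.coprime_iff_not_dvd Nat.prime_two).mpr h)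
        simpa using this
      obtain ⟨t, ht⟩ := hu2.exists_left_inv
      apply hzne
      calc z = t * (2 * z) := by rw [← mul_assoc, ht, one_mul]
      _ = 0 := by rw [h2z, mul_zero]
    -- z.val = N/2
    have hzval : 2 * z.val = N := by
      have h1 : (N:ℕ) ∣ 2 * z.val := by
        have hcast : ((2 * z.val : ℕ) : ZMod N) = 0 := by
          push_cast
          rw [ZMod.natCast_val, ZMod.cast_id]
          exact h2z
        exact (ZMod.natCast_eq_zero_iff _ N).mp hcast
      have h2 : z.val < N := ZMod.val_lt z
      have h3 : z.val ≠ 0 := fun h => hzne ((ZMod.val_eq_zero z).mp h)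
      rcases h1 with ⟨k, hk⟩
      rcases Nat.lt_or_ge k 1 with hk1 | hk1
      · interval_cases k <;> omega
      · rcases Nat.lt_or_ge k 2 with hk2 | hk2
        · interval_cases k <;> omega
        · nlinarith
    -- z.val is even
    have hzeven : (2:ℕ) ∣ z.val := by
      obtain ⟨ju, hju⟩ := hodd h2N u
      obtain ⟨jv, hjv⟩ := hodd h2N v
      have hz2 : z = 2 * ((ju : ZMod N) - jv) := by
        rw [hzdef, hju, hjv]; ring
      -- so ψ z = 0 in ZMod 2, hence z.val even
      have hψ : ((z.val : ℕ) : ZMod 2) = 0 := by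
        have h20 : (ZMod.castHom h2N (ZMod 2)) 2 = 0 := by
          have h2cast : ((2:ℕ) : ZMod N) = (2 : ZMod N) := by push_cast; ring
          rw [← h2cast, map_natCast]
          decide
        have : (ZMod.castHom h2N (ZMod 2)) z = 0 := by
          rw [hz2, map_mul, h20, zero_mul]
        rwa [ZMod.castHom_apply, ← ZMod.natCast_val] at this
      exact (ZMod.natCast_eq_zero_iff _ 2).mp hψ
    have hzpos : 0 < z.val := Nat.pos_of_ne_zero (fun h => hzne ((ZMod.val_eq_zero z).mp h))
    -- d.val is even
    have hdeven : (2:ℕ) ∣ d.val := by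
      have h1 : (N:ℕ) ∣ d.val * z.val := by
        have hcast : ((d.val * z.val : ℕ) : ZMod N) = 0 := by
          push_cast
          rw [ZMod.natCast_val, ZMod.cast_id, ZMod.natCast_val, ZMod.cast_id]
          exact hz
        exact (ZMod.natCast_eq_zero_iff _ N).mp hcast
      rcases h1 with ⟨k, hk⟩
      have hstep : d.val * z.val = (2 * k) * z.val := by
        calc d.val * z.val = N * k := hk
        _ = (2 * z.val) * k := by rw [hzval]
        _ = (2 * k) * z.val := by ring
      have hdk := Nat.eq_of_mul_eq_mul_right hzpos hstep
      exact ⟨k, hdk⟩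
    -- c.val is even
    have hceven : (2:ℕ) ∣ c.val := by
      have h1 : (N:ℕ) ∣ 2 * c.val := by
        have hcast : ((2 * c.val : ℕ) : ZMod N) = 0 := by
          push_cast
          rw [ZMod.natCast_val, ZMod.cast_id]
          exact h2c
        exact (ZMod.natCast_eq_zero_iff _ N).mp hcast
      rcases h1 with ⟨k, hk⟩
      have hstep : 2 * c.val = 2 * (z.val * k) := by
        calc 2 * c.val = N * k := hk
        _ = (2 * z.val) * k := by rw [hzval]
        _ = 2 * (z.val * k) := by ring
      have hck : c.val = z.val * k := by omega
      rw [hck]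
      exact Dvd.dvd.mul_right hzeven k
    -- contradiction via reduction mod 2
    have hψdet := congrArg (ZMod.castHom h2N (ZMod 2)) hdet
    simp only [map_sub, map_mul, map_one] at hψdet
    have hψd : (ZMod.castHom h2N (ZMod 2)) d = 0 := by
      rw [ZMod.castHom_apply, ← ZMod.natCast_val]
      exact (ZMod.natCast_eq_zero_iff _ 2).mpr hdeven
    have hψc : (ZMod.castHom h2N (ZMod 2)) c = 0 := by
      rw [ZMod.castHom_apply, ← ZMod.natCast_val]
      exact (ZMod.natCast_eq_zero_iff _ 2).mpr hceven
    rw [hψd, hψc, mul_zero, mul_zero, sub_zero] at hψdet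
    exact zero_ne_one hψdet
  · -- easy direction
    intro h2d x
    left
    refine ⟨rfl, ?_⟩
    by_cases h2N : (2:ℕ) ∣ N
    · obtain ⟨j, hj⟩ := hodd h2N x
      linear_combination d * hj + (j : ZMod N) * h2d
    · have hu2 : IsUnit (2 : ZMod N) := by
        have := (ZMod.isUnit_iff_coprime 2 N).mpr
          ((Nat.Prime.coprime_iff_not_dvd Nat.prime_two).mpr h2N)
        simpa using this
      obtain ⟨t, ht⟩ := hu2.exists_left_inv
      have hd0 : d = 0 := by
        calc d = t * (2 * d) := by rw [← mul_assoc, ht, one_mul]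
        _ = 0 := by rw [h2d, mul_zero]
      rw [hd0, zero_mul]
end

section
/- Let N ∈ ℕ with φ(N) ≥ 3, and suppose N is odd or divisible by 4. Let (c,d) with gcd(c,d,N)=1 represent a cusp of X₁(N). Then there exists t ∈ ℤ such that 2(d + tc) ≡ 0 mod N if and only if gcd(c,N) = 1. -/
/-!
If `gcd(c, N) = 1` then `c` is invertible mod `N` and `t = -d c⁻¹` works. Conversely, when `N` is
odd or `4 ∣ N`, the congruence `N ∣ 2x` already forces `N ∣ x²`; so every common divisor `g` of
`c` and `N` divides `(d + tc)²`, while `gcd(c, d, N) = 1` makes `g` coprime to `d`, hence to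
`d + tc`, and `g` must be a unit.
-/

theorem Int.exists_dvd_add_mul_of_isCoprime {c n : ℤ} (h : IsCoprime c n) (d : ℤ) :
    ∃ t : ℤ, n ∣ d + t * c := by
  obtain ⟨u, v, huv⟩ := h
  exact ⟨-d * u, d * v, by linear_combination -d * huv⟩

theorem Int.dvd_sq_of_dvd_two_mul {n x : ℤ} (hn : Odd n ∨ 4 ∣ n) (h : n ∣ 2 * x) :
    n ∣ x ^ 2 := by
  rcases hn with hodd | ⟨m, rfl⟩
  · exact (Int.isCoprime_two_right.mpr hodd).dvd_of_dvd_mul_left h |>.pow two_ne_zero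
  · obtain ⟨k, hk⟩ : 2 * m ∣ x := by
      obtain ⟨k, hk⟩ := h
      exact ⟨k, by linarith⟩
    exact ⟨m * k ^ 2, by rw [hk]; ring⟩

theorem Int.isCoprime_of_gcd_gcd_eq_one {c d n g : ℤ} (h : Int.gcd c (Int.gcd d n) = 1)
    (hgc : g ∣ c) (hgn : g ∣ n) : IsCoprime g d := by
  rw [Int.isCoprime_iff_gcd_eq_one]
  have hdvd : (Int.gcd g d : ℤ) ∣ Int.gcd c (Int.gcd d n) :=
    Int.dvd_coe_gcd ((Int.gcd_dvd_left _ _).trans hgc)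
      (Int.dvd_coe_gcd (Int.gcd_dvd_right _ _) ((Int.gcd_dvd_left _ _).trans hgn))
  rw [h] at hdvd
  exact Nat.dvd_one.mp (by exact_mod_cast hdvd)

theorem stmt7_general (N : ℕ) (hN4 : Odd N ∨ 4 ∣ N)
    (c d : ℤ) (hgcd : Int.gcd c (Int.gcd d (N : ℤ)) = 1) :
    (∃ t : ℤ, (N : ℤ) ∣ 2 * (d + t * c)) ↔ Int.gcd c (N : ℤ) = 1 := by
  refine ⟨fun ⟨t, ht⟩ => ?_, fun h => ?_⟩
  · have hN4' : Odd (N : ℤ) ∨ 4 ∣ (N : ℤ) := hN4.imp (by exact_mod_cast ·) (by exact_mod_cast ·)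
    set g : ℤ := (Int.gcd c N : ℤ)
    obtain ⟨k, hk⟩ : g ∣ c := Int.gcd_dvd_left _ _
    have hsq : g ∣ (d + t * c) ^ 2 :=
      (Int.gcd_dvd_right _ _).trans (Int.dvd_sq_of_dvd_two_mul hN4' ht)
    have hcop : IsCoprime g (d + t * c) := by
      rw [hk, mul_left_comm]
      exact (Int.isCoprime_of_gcd_gcd_eq_one hgcd (Int.gcd_dvd_left _ _)
        (Int.gcd_dvd_right _ _)).add_mul_left_right _
    have hunit : IsUnit g := hcop.pow_right.isUnit_of_dvd' dvd_rfl hsq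
    rcases Int.isUnit_iff.mp hunit with h1 | h1 <;> omega
  · obtain ⟨t, ht⟩ := Int.exists_dvd_add_mul_of_isCoprime (Int.isCoprime_iff_gcd_eq_one.mpr h) d
    exact ⟨t, dvd_mul_of_dvd_right ht 2⟩

/-- let `φ(N) ≥ 3` and `N` odd or `4 ∣ N`, and let `(c,d)` with
`gcd(c,d,N) = 1` represent a cusp of `X₁(N)`.  Then there exists `t ∈ ℤ` with
`2(d + tc) ≡ 0 mod N` iff `gcd(c,N) = 1`. -/
theorem stmt7 (N : ℕ) (hN : 3 ≤ Nat.totient N) (hN4 : Odd N ∨ 4 ∣ N)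
    (c d : ℤ) (hgcd : Int.gcd c (Int.gcd d (N : ℤ)) = 1) :
    (∃ t : ℤ, (N : ℤ) ∣ 2 * (d + t * c)) ↔ Int.gcd c (N : ℤ) = 1 :=
  stmt7_general N hN4 c d hgcd
end

section
/- For N = 10, c = 2, d = 5: the cusp of X₁(10) represented by (c,d) = (2,5) has width 5 (not 10), and yet 2d ≡ 0 mod 10, so the matrix [1 2; 2 5] ∈ SL₂(ℤ) yields rational q-expansions while the cusp has width strictly less than N. -/
/-- for `N = 10`, the cusp of `X₁(10)` represented by `(c,d) = (2,5)`
(with `M = [1 2; 2 5] ∈ SL₂(ℤ)`, i.e. `a = 1, b = 2, c = 2, d = 5`, `1·5 - 2·2 = 1`)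
has width `5 < 10`, and yet `2d ≡ 0 mod 10`, so `M` yields rational `q`-expansions
while the width is strictly less than `N`.  The width is the least `w > 0` with
`10 ∣ c²w` and `1 ± acw ≡ ±1 mod 10` (here `H = {±1}`). -/
theorem stmt8 :
    (1 * 5 - 2 * 2 : ℤ) = 1 ∧
    sInf {w : ℕ | 0 < w ∧ (10 : ℤ) ∣ (2 : ℤ) ^ 2 * w ∧
        (((1 - 1 * 2 * w : ℤ) : ZMod 10) = 1 ∨ ((1 - 1 * 2 * w : ℤ) : ZMod 10) = -1) ∧
        (((1 + 1 * 2 * w : ℤ) : ZMod 10) = 1 ∨ ((1 + 1 * 2 * w : ℤ) : ZMod 10) = -1)} = 5 ∧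
    (2 * 5 : ZMod 10) = 0 ∧
    (5 : ℕ) < 10 := by
  refine ⟨by norm_num, ?_, by decide, by norm_num⟩
  have h5 : (5 : ℕ) ∈ {w : ℕ | 0 < w ∧ (10 : ℤ) ∣ (2 : ℤ) ^ 2 * w ∧
        (((1 - 1 * 2 * w : ℤ) : ZMod 10) = 1 ∨ ((1 - 1 * 2 * w : ℤ) : ZMod 10) = -1) ∧
        (((1 + 1 * 2 * w : ℤ) : ZMod 10) = 1 ∨ ((1 + 1 * 2 * w : ℤ) : ZMod 10) = -1)} := by
    refine ⟨by norm_num, by norm_num, ?_, ?_⟩ <;> norm_num <;> decide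
  refine le_antisymm (Nat.sInf_le h5) ?_
  refine le_csInf ⟨5, h5⟩ ?_
  rintro w ⟨hw, ⟨k, hk⟩, -⟩
  have : (4 : ℤ) * w = 10 * k := by push_cast at hk ⊢; linarith
  omega
end

section
/- An automorphism [m ζ; 0 j] of C_n^reg = 𝔾_m × ℤ/nℤ (with m ∈ {±1}, ζ ∈ μ_n, j ∈ (ℤ/nℤ)^×, acting by (x,i) ↦ (ζ^i x^m, ji)) extends to an automorphism of the Néron n-gon C_n (i.e. respects the gluing (∞,i) ∼ (0,i+1)) if and only if j = m. Consequently Aut(C_n) = ± [1 μ_n; 0 1], i.e. automorphisms of the form (x,i) ↦ ±(ζ^i x^{±1}, ±i). -/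
open scoped Classical

/-- the automorphism `[m ζ; 0 j]` of `C_n^reg = 𝔾_m × ℤ/nℤ`
(with `m = ±1`, `ζ ∈ μ_n`, `j ∈ (ℤ/nℤ)ˣ`, acting by `(x,i) ↦ (ζ^i x^m, ji)`),
extended to each component `ℙ¹ = K ∪ {∞}` (modelled by `Option K`, `none = ∞`),
respects the gluing `(∞, i) ∼ (0, i+1)` of the Néron `n`-gon iff `j = m`. -/
theorem stmt10 (K : Type*) [Field K] (n : ℕ) (hn : 0 < n)
    (ζ : Kˣ) (hζ : (ζ : K) ^ n = 1) (m : ℤ) (hm : m = 1 ∨ m = -1)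
    (j : ZMod n) (hj : IsUnit j) :
    (∀ p q : Option K × ZMod n,
      -- the gluing relation (∞,i) ∼ (0,i+1)
      (p = q ∨ (p.1 = none ∧ q = (some 0, p.2 + 1)) ∨ (q.1 = none ∧ p = (some 0, q.2 + 1))) →
      -- is preserved by the extension Φ of (x,i) ↦ (ζ^i x^m, ji)
      (let ext : ZMod n → Option K → Option K := fun i x =>
        x.elim (if m = 1 then none else some 0)
          (fun a => if a = 0 then (if m = 1 then some 0 else none)
            else some ((ζ : K) ^ i.val * (if m = 1 then a else a⁻¹)))
       let Φ : Option K × ZMod n → Option K × ZMod n := fun p => (ext p.2 p.1, j * p.2)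
       (Φ p = Φ q ∨ ((Φ p).1 = none ∧ Φ q = (some 0, (Φ p).2 + 1)) ∨
         ((Φ q).1 = none ∧ Φ p = (some 0, (Φ q).2 + 1)))))
    ↔ j = (m : ZMod n) := by

  constructor
  · intro h
    have H := h (none, 0) (some 0, 1) (Or.inr (Or.inl ⟨rfl, by simp⟩))
    rcases hm with rfl | rfl
    · simp only [Int.cast_one]
      simpa using H
    · simp only [Int.cast_neg, Int.cast_one]
      simp at H
      linear_combination -H
  · intro hjm p q hrel
    intro ext Φ
    rcases hrel with rfl | ⟨h1, rfl⟩ | ⟨h1, rfl⟩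
    · exact Or.inl rfl
    · rcases hm with rfl | rfl
      · refine Or.inr (Or.inl ⟨?_, ?_⟩)
        · simp [Φ, ext, Option.elim]
          cases p with
          | mk a b => cases a <;> simp_all [ext]
        · simp only [Int.cast_one] at hjm
          subst hjm
          cases p with
          | mk a b =>
            cases a <;> simp_all [Φ, ext]
      · simp only [Int.cast_neg, Int.cast_one] at hjm
        subst hjm
        refine Or.inr (Or.inr ⟨?_, ?_⟩)
        · cases p with
          | mk a b => cases a <;> simp_all [Φ, ext]
        · cases p with
          | mk a b =>
            cases a <;> simp_all [Φ, ext]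
    · rcases hm with rfl | rfl
      · simp only [Int.cast_one] at hjm
        subst hjm
        refine Or.inr (Or.inr ⟨?_, ?_⟩)
        · cases q with
          | mk a b => cases a <;> simp_all [Φ, ext]
        · cases q with
          | mk a b =>
            cases a <;> simp_all [Φ, ext]
      · simp only [Int.cast_neg, Int.cast_one] at hjm
        subst hjm
        refine Or.inr (Or.inl ⟨?_, ?_⟩)
        · cases q with
          | mk a b => cases a <;> simp_all [Φ, ext]
        · cases q with
          | mk a b =>
            cases a <;> simp_all [Φ, ext]
end

section
/- Let N ∈ ℕ, ζ a primitive N-th root of unity in a field of characteristic not dividing N, and v = (c,d) a nonzero element of (ℤ/Nℤ)² with 0 ≤ c < N. Define a₀ = (1/2)·(1+ζ^d)/(1-ζ^d) if c = 0, and a₀ = 1/2 - c/N if c ≠ 0; and for n ≥ 1, a_n = Σ_{ab = n, a ≡ c mod N} sgn(b)·ζ^{bd} where the sum is over factorizations n = ab with a, b ∈ ℤ. Then a_n is well-defined (finite sum) for each n, and the formal series Σ_{n≥0} a_n q^n has coefficients in ℤ[ζ, 1/(2N)]. -/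
/-!
The only denominators are `2`, `N` and `1 - ζ^d`. The first two are inverted in
`ℤ[ζ, 1/(2N)]`, and so is the third when `c = 0`: for a root of unity `w ≠ 1` of order
dividing `N`, differentiating the geometric series gives `(1 - w) · ∑_{k<N} (k+1) w^k = -N`.
The coefficients `a_n` with `n ≥ 1` are finite sums of `±ζ^m`, and `ζ⁻¹ = ζ^(N-1)`.
-/

open Finset

section

variable {K : Type*}

theorem inv_mem_of_pow_eq_one [DivisionRing K] {R : Subring K} {x : K} {n : ℕ}
    (hx : x ∈ R) (hn : n ≠ 0) (hxn : x ^ n = 1) : x⁻¹ ∈ R := by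
  have hinv : x⁻¹ = x ^ (n - 1) :=
    inv_eq_of_mul_eq_one_right (by rwa [← pow_succ', Nat.sub_add_cancel (Nat.pos_of_ne_zero hn)])
  exact hinv ▸ pow_mem hx _

theorem zpow_mem_of_inv_mem [DivisionRing K] {R : Subring K} {x : K}
    (hx : x ∈ R) (hx' : x⁻¹ ∈ R) : ∀ m : ℤ, x ^ m ∈ R
  | (k : ℕ) => by rw [zpow_natCast]; exact pow_mem hx k
  | .negSucc k => by rw [zpow_negSucc, ← inv_pow]; exact pow_mem hx' _

theorem inv_mem_of_mul_inv_mem [Field K] {R : Subring K} {a b : K}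
    (hab : (a * b)⁻¹ ∈ R) (hb : b ∈ R) (hb0 : b ≠ 0) : a⁻¹ ∈ R := by
  have : a⁻¹ = b * (a * b)⁻¹ := by rw [mul_inv, mul_left_comm, mul_inv_cancel₀ hb0, mul_one]
  exact this ▸ mul_mem hb hab

theorem one_sub_mul_sum_range_succ_mul_pow {A : Type*} [CommRing A] (w : A) (m : ℕ) :
    (1 - w) * ∑ k ∈ range m, ((k : A) + 1) * w ^ k = ∑ k ∈ range m, w ^ k - m * w ^ m := by
  induction m with
  | zero => simp
  | succ m ih =>
    rw [sum_range_succ, sum_range_succ, mul_add, ih]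
    push_cast
    ring

theorem inv_one_sub_eq_of_pow_eq_one [Field K] {w : K} {N : ℕ}
    (hwN : w ^ N = 1) (hw1 : w ≠ 1) (hN : (N : K) ≠ 0) :
    (1 - w)⁻¹ = -(N : K)⁻¹ * ∑ k ∈ range N, ((k : K) + 1) * w ^ k := by
  have hgeom : ∑ k ∈ range N, w ^ k = 0 := by rw [geom_sum_eq hw1, hwN, sub_self, zero_div]
  have hmul := one_sub_mul_sum_range_succ_mul_pow w N
  rw [hgeom, hwN, mul_one, zero_sub] at hmul
  refine inv_eq_of_mul_eq_one_right ?_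
  rw [mul_left_comm, hmul, neg_mul_neg, inv_mul_cancel₀ hN]

theorem inv_one_sub_mem_of_pow_eq_one [Field K] {R : Subring K} {w : K} {N : ℕ}
    (hw : w ∈ R) (hwN : w ^ N = 1) (hw1 : w ≠ 1) (hN : (N : K) ≠ 0) (hNinv : (N : K)⁻¹ ∈ R) :
    (1 - w)⁻¹ ∈ R := by
  rw [inv_one_sub_eq_of_pow_eq_one hwN hw1 hN]
  refine mul_mem (neg_mem hNinv) (sum_mem fun k _ => mul_mem ?_ (pow_mem hw k))
  exact add_mem (natCast_mem R k) (one_mem R)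

end

theorem Int.finite_setOf_mul_eq {n : ℤ} (hn : n ≠ 0) : {q : ℤ × ℤ | q.1 * q.2 = n}.Finite :=
  n.divisorsAntidiag.finite_toSet.subset fun _ hq => Int.mem_divisorsAntidiag.2 ⟨hq, hn⟩

theorem stmt18_general (N : ℕ) (K : Type*) [Field K] (ζ : K)
    (hζ : IsPrimitiveRoot ζ N) (hchar : ((2 * N : ℕ) : K) ≠ 0)
    (c : ℕ) (d : ℤ) (hv : ¬(c = 0 ∧ (N : ℤ) ∣ d)) :
    (∀ n : ℕ, 1 ≤ n →
      {q : ℤ × ℤ | q.1 * q.2 = (n : ℤ) ∧ (N : ℤ) ∣ q.1 - (c : ℤ)}.Finite) ∧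
    ((if c = 0 then (1 / 2 : K) * (1 + ζ ^ d) / (1 - ζ ^ d)
        else (1 / 2 : K) - (c : K) / (N : K)) ∈
      Subring.closure {ζ, (((2 * N : ℕ) : K))⁻¹}) ∧
    (∀ n : ℕ, 1 ≤ n →
      (∑ᶠ q ∈ {q : ℤ × ℤ | q.1 * q.2 = (n : ℤ) ∧ (N : ℤ) ∣ q.1 - (c : ℤ)},
          ((q.2.sign : ℤ) : K) * ζ ^ (q.2 * d)) ∈
        Subring.closure {ζ, (((2 * N : ℕ) : K))⁻¹}) := by
  set R := Subring.closure {ζ, (((2 * N : ℕ) : K))⁻¹}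
  have h2N : ((2 * N : ℕ) : K)⁻¹ ∈ R := Subring.subset_closure (by simp)
  rw [Nat.cast_mul, Nat.cast_ofNat] at hchar h2N
  have h2 : (2 : K) ≠ 0 := left_ne_zero_of_mul hchar
  have hN : (N : K) ≠ 0 := right_ne_zero_of_mul hchar
  have h2inv : (2 : K)⁻¹ ∈ R := inv_mem_of_mul_inv_mem h2N (natCast_mem R N) hN
  have hNinv : (N : K)⁻¹ ∈ R :=
    inv_mem_of_mul_inv_mem (mul_comm (2 : K) N ▸ h2N) (ofNat_mem R 2) h2
  have hζR : ζ ∈ R := Subring.subset_closure (by simp)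
  have hζpow : ∀ m : ℤ, ζ ^ m ∈ R := zpow_mem_of_inv_mem hζR
    (inv_mem_of_pow_eq_one hζR (by rintro rfl; simp at hN) hζ.pow_eq_one)
  have hfin : ∀ n : ℕ, 1 ≤ n →
      {q : ℤ × ℤ | q.1 * q.2 = (n : ℤ) ∧ (N : ℤ) ∣ q.1 - (c : ℤ)}.Finite := fun n hn =>
    (Int.finite_setOf_mul_eq (by omega)).subset fun _ hq => hq.1
  refine ⟨hfin, ?_, fun n hn => ?_⟩
  · split_ifs with hc0
    · have hd1 : ζ ^ d ≠ 1 := fun h => hv ⟨hc0, (hζ.zpow_eq_one_iff_dvd d).mp h⟩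
      have hdN : (ζ ^ d) ^ N = 1 := by
        rw [← zpow_natCast, ← zpow_mul, mul_comm, zpow_mul, hζ.zpow_eq_one, one_zpow]
      rw [div_eq_mul_inv, one_div]
      exact mul_mem (mul_mem h2inv (add_mem (one_mem R) (hζpow d)))
        (inv_one_sub_mem_of_pow_eq_one (hζpow d) hdN hd1 hN hNinv)
    · rw [one_div, div_eq_mul_inv]
      exact sub_mem h2inv (mul_mem (natCast_mem R c) hNinv)
  · rw [finsum_mem_eq_finite_toFinset_sum _ (hfin n hn)]
    exact sum_mem fun q _ => mul_mem (intCast_mem R _) (hζpow _)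

/-- let `ζ` be a primitive `N`-th root of unity in a field whose
characteristic does not divide `2N`, and `v = (c,d) ≠ 0` in `(ℤ/Nℤ)²` with `0 ≤ c < N`.
With `a₀ = (1/2)(1+ζ^d)/(1-ζ^d)` if `c = 0`, `a₀ = 1/2 - c/N` otherwise, and
`a_n = Σ_{ab = n, a ≡ c mod N} sgn(b)·ζ^{bd}` for `n ≥ 1`: each `a_n` is a well-defined
(finite) sum, and all coefficients `a_n` lie in `ℤ[ζ, 1/(2N)]`. -/
theorem stmt18 (N : ℕ) (hN : 0 < N) (K : Type*) [Field K] (ζ : K)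
    (hζ : IsPrimitiveRoot ζ N) (hchar : ((2 * N : ℕ) : K) ≠ 0)
    (c : ℕ) (d : ℤ) (hc : c < N) (hv : ¬(c = 0 ∧ (N : ℤ) ∣ d)) :
    (∀ n : ℕ, 1 ≤ n →
      {q : ℤ × ℤ | q.1 * q.2 = (n : ℤ) ∧ (N : ℤ) ∣ q.1 - (c : ℤ)}.Finite) ∧
    ((if c = 0 then (1 / 2 : K) * (1 + ζ ^ d) / (1 - ζ ^ d)
        else (1 / 2 : K) - (c : K) / (N : K)) ∈
      Subring.closure {ζ, (((2 * N : ℕ) : K))⁻¹}) ∧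
    (∀ n : ℕ, 1 ≤ n →
      (∑ᶠ q ∈ {q : ℤ × ℤ | q.1 * q.2 = (n : ℤ) ∧ (N : ℤ) ∣ q.1 - (c : ℤ)},
          ((q.2.sign : ℤ) : K) * ζ ^ (q.2 * d)) ∈
        Subring.closure {ζ, (((2 * N : ℕ) : K))⁻¹}) :=
  stmt18_general N K ζ hζ hchar c d hv
end

section
/- For N ∈ ℕ, the map from {(c,d) : c ∈ ℤ/Nℤ, d ∈ (ℤ/gcd(c,N)ℤ)^×}/±1 to pairs (Néron n-gon, point), sending (c,d) to (C_{N/gcd(c,N)}, (ζ_N^d, c/gcd(c,N))), is well-defined: the point (ζ_N^d, c/gcd(c,N)) ∈ 𝔾_m × ℤ/(N/gcd(c,N))ℤ has exact order N and its multiples meet every component. In particular, for each pair (c,d) as above, the order of (ζ_N^d, c/gcd(c,N)) in 𝔾_m × ℤ/(N/gcd(c,N))ℤ equals N. -/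
/-- the parametrisation of the cusps of `X₁(N)` is well defined: for
`c ∈ ℤ/Nℤ` and `d ∈ (ℤ/gcd(c,N)ℤ)ˣ`, the point `(ζ_N^d, c/gcd(c,N))` of
`C_{N/gcd(c,N)}^reg = 𝔾_m × ℤ/(N/gcd(c,N))ℤ` has exact order `N`, and its multiples
meet every component, i.e. `c/gcd(c,N)` generates `ℤ/(N/gcd(c,N))ℤ`. -/
theorem stmt19 (N : ℕ) (hN : 0 < N) (K : Type*) [Field K] (ζ : Kˣ)
    (hζ : IsPrimitiveRoot ζ N) (c d : ℕ)
    (hd : Nat.Coprime d (Nat.gcd c N)) :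
    orderOf ((ζ ^ d,
        Multiplicative.ofAdd ((↑(c / Nat.gcd c N) : ZMod (N / Nat.gcd c N)))) :
        Kˣ × Multiplicative (ZMod (N / Nat.gcd c N))) = N ∧
    addOrderOf ((↑(c / Nat.gcd c N) : ZMod (N / Nat.gcd c N))) = N / Nat.gcd c N := by
  set g := Nat.gcd c N with hg
  set n := N / g with hn
  have hgpos : 0 < g := Nat.gcd_pos_of_pos_right _ hN
  have hgdvd : g ∣ N := Nat.gcd_dvd_right c N
  have hnpos : 0 < n := Nat.div_pos (Nat.le_of_dvd hN hgdvd) hgpos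
  have hcop : Nat.Coprime (c / g) n := by
    simpa [hg, hn] using Nat.coprime_div_gcd_div_gcd (m := c) (n := N) hgpos
  have hadd : addOrderOf ((↑(c / g) : ZMod n)) = n := by
    rw [ZMod.addOrderOf_coe _ hnpos.ne', Nat.Coprime.gcd_eq_one hcop.symm, Nat.div_one]
  refine ⟨?_, hadd⟩
  have hord : orderOf ζ = N := hζ.eq_orderOf.symm
  have h1 : orderOf (ζ ^ d) = N / Nat.gcd N d := by
    rcases Nat.eq_zero_or_pos d with rfl | hdpos
    · simp [Nat.div_self hN]
    · rw [orderOf_pow' _ hdpos.ne', hord]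
  rw [Prod.orderOf_mk, h1, orderOf_ofAdd_eq_addOrderOf, hadd]
  set e := Nat.gcd N d with he
  have hedvd : e ∣ N := Nat.gcd_dvd_left N d
  have hcop2 : Nat.Coprime e g := Nat.Coprime.coprime_dvd_left (Nat.gcd_dvd_right N d) hd
  -- lcm (N/e) (N/g) = N
  apply Nat.dvd_antisymm
  · exact Nat.lcm_dvd (Nat.div_dvd_of_dvd hedvd) (Nat.div_dvd_of_dvd hgdvd)
  · set L := Nat.lcm (N / e) (N / g) with hL
    have h2 : N ∣ L * e := by
      have : N / e * e = N := Nat.div_mul_cancel hedvd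
      calc N = N / e * e := this.symm
        _ ∣ L * e := Nat.mul_dvd_mul_right (Nat.dvd_lcm_left _ _) e
    have h3 : N ∣ L * g := by
      have : N / g * g = N := Nat.div_mul_cancel hgdvd
      calc N = N / g * g := this.symm
        _ ∣ L * g := Nat.mul_dvd_mul_right (Nat.dvd_lcm_right _ _) g
    have := Nat.dvd_gcd h2 h3
    rwa [Nat.gcd_mul_left, hcop2.gcd_eq_one, Nat.mul_one] at this
end
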